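/- arXiv:1209.2852 — 2 statements merged into one kernel-verified Lean document; each statement's English description precedes it below -/
import Mathlib

section
/- Let E be a countable set, h > 0, and a ∈ ℓ²(E, ℂ). Then for every real p with 1 ≤ p < ∞, each ℓ_{a,F_n} belongs to L^p(ℝ^E, μ_{E,h}^K) and the sequence (ℓ_{a,F_n})_{n≥0} converges in L^p(μ_{E,h}^K) (to the function ℓ_a that is its L² limit). (Theorem 2.6, L^p part.) -/
/-!
Under `μ` a real linear form `∑_{j ∈ S} c_j x_j` only sees the marginal of `μ` on `ℝ^S`, a product
of centred Gaussians, so by a characteristic-function computation it is itself a centred Gaussian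
of variance `(h/2) ∑_{j ∈ S} c_j²`. Its `L^p` norm is therefore `(∑_{j ∈ S} c_j²)^{1/2}` times the
`L^p` norm of a fixed Gaussian, and splitting `a` into real and imaginary parts gives
`‖ℓ_{a,S}‖_p ≤ C_p ‖a|_S‖_{ℓ²}`. Since `a ∈ ℓ²`, the sequence `(ℓ_{a,F_n})` is Cauchy in every
`L^p`, and all its limits coincide a.e.: on a probability space `L^r` convergence implies `L^2`
convergence for `r ≥ 2`, and `L^2` limits are unique.
-/

open MeasureTheory ProbabilityTheory Filter
open scoped NNReal ENNReal

/-- `ℓ_{a,S}(x) = ∑_{j∈S} a_j x_j`. -/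
noncomputable def ellSum {E : Type*} (a : E → ℂ) (S : Finset E) (x : E → ℝ) : ℂ :=
  ∑ j ∈ S, a j * (x j : ℂ)

open scoped Topology

lemma map_sum_mul_pi_gaussianReal {ι : Type*} [Fintype ι] (v : ℝ≥0) (c : ι → ℝ) :
    (Measure.pi fun _ : ι => gaussianReal 0 v).map (fun y => ∑ i, c i * y i) =
      gaussianReal 0 ((∑ i, ‖c i‖₊ ^ 2) * v) := by
  have hcomp : (fun y : ι → ℝ => ∑ i, c i * y i) = (fun y => ∑ i, y i) ∘ fun y i => c i * y i :=
    rfl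
  refine Measure.ext_of_charFun ?_
  rw [hcomp, ← Measure.map_map (by fun_prop) (by fun_prop),
    Measure.pi_map_pi fun _ => by fun_prop]
  simp_rw [gaussianReal_map_const_mul, mul_zero]
  rw [charFun_map_sum_pi_eq_prod]
  ext t
  simp only [Finset.prod_apply, charFun_gaussianReal, ← Complex.exp_sum]
  congr 1
  push_cast
  simp [Finset.sum_mul, Finset.sum_div, ← Complex.ofReal_pow]

lemma eLpNorm_id_gaussianReal_mul (s v : ℝ≥0) (p : ℝ≥0∞) :
    eLpNorm id p (gaussianReal 0 (s * v)) = NNReal.sqrt s * eLpNorm id p (gaussianReal 0 v) := by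
  have key := gaussianReal_map_const_mul (μ := 0) (v := v) (NNReal.sqrt s : ℝ)
  rw [mul_zero, show NNReal.mk ((NNReal.sqrt s : ℝ) ^ 2) (sq_nonneg _) = s by ext; simp] at key
  rw [← key, eLpNorm_map_measure (by fun_prop) (by fun_prop)]
  exact (eLpNorm_const_smul (NNReal.sqrt s : ℝ) id p _).trans (by rw [NNReal.enorm_eq])

lemma tendsto_eLpNorm_sub_of_exponent_le {α F ι : Type*} [MeasurableSpace α] {μ : Measure α}
    [IsProbabilityMeasure μ] [NormedAddCommGroup F] {l : Filter ι} {f : ι → α → F} {g : α → F}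
    {p q : ℝ≥0∞} (hpq : p ≤ q) (hf : ∀ n, AEStronglyMeasurable (f n) μ)
    (hg : AEStronglyMeasurable g μ) (h : Tendsto (fun n => eLpNorm (f n - g) q μ) l (𝓝 0)) :
    Tendsto (fun n => eLpNorm (f n - g) p μ) l (𝓝 0) :=
  tendsto_of_tendsto_of_tendsto_of_le_of_le tendsto_const_nhds h (fun _ => zero_le)
    fun n => eLpNorm_le_eLpNorm_of_exponent_le hpq ((hf n).sub hg)

lemma measurable_ellSum {E : Type*} (a : E → ℂ) (S : Finset E) : Measurable (ellSum a S) := by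
  unfold ellSum
  fun_prop

lemma ellSum_sub_ellSum_of_subset {E : Type*} [DecidableEq E] (a : E → ℂ) {S T : Finset E}
    (hTS : T ⊆ S) :
    ellSum a S - ellSum a T = ellSum a (S \ T) := by
  ext x
  simp [ellSum, Finset.sum_sdiff_eq_sub hTS]

lemma ellSum_eq_re_add_im {E : Type*} (a : E → ℂ) (S : Finset E) (x : E → ℝ) :
    ellSum a S x = (∑ j ∈ S, (a j).re * x j : ℝ) + (∑ j ∈ S, (a j).im * x j : ℝ) * Complex.I := by
  apply Complex.ext <;> simp [ellSum, Complex.re_sum, Complex.im_sum]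

def HasIIDGaussianCoords {E : Type*} (μ : Measure (E → ℝ)) (v : ℝ≥0) : Prop :=
  ∀ S : Finset E, μ.map (fun x (i : S) => x i) = Measure.pi fun _ : S => gaussianReal 0 v

namespace HasIIDGaussianCoords

variable {E : Type*} {μ : Measure (E → ℝ)} {v : ℝ≥0}

lemma eLpNorm_sum_mul (hμ : HasIIDGaussianCoords μ v) (c : E → ℝ) (S : Finset E) (p : ℝ≥0∞) :
    eLpNorm (fun x => ∑ j ∈ S, c j * x j) p μ =
      NNReal.sqrt (∑ j ∈ S, ‖c j‖₊ ^ 2) * eLpNorm id p (gaussianReal 0 v) := by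
  set L : (S → ℝ) → ℝ := fun y => ∑ i : S, c i * y i with hL_def
  have hL : Measurable L := by fun_prop
  calc eLpNorm (fun x => ∑ j ∈ S, c j * x j) p μ
      = eLpNorm (L ∘ fun x i => x i) p μ := by
        simp only [L, Function.comp_def, Finset.sum_coe_sort S fun j => c j * _]
    _ = eLpNorm id p ((Measure.pi fun _ : S => gaussianReal 0 v).map L) := by
        rw [← hμ S, Measure.map_map hL (by fun_prop),
          eLpNorm_map_measure (by fun_prop) (hL.comp (by fun_prop)).aemeasurable]
        rfl
    _ = _ := by
        rw [hL_def, map_sum_mul_pi_gaussianReal, eLpNorm_id_gaussianReal_mul,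
          Finset.sum_coe_sort S fun j => ‖c j‖₊ ^ 2]

lemma eLpNorm_ellSum_le (hμ : HasIIDGaussianCoords μ v) (a : E → ℂ) (S : Finset E) {p : ℝ≥0∞}
    (hp : 1 ≤ p) :
    eLpNorm (ellSum a S) p μ ≤
      2 * NNReal.sqrt (∑ j ∈ S, ‖a j‖₊ ^ 2) * eLpNorm id p (gaussianReal 0 v) := by
  have hre : NNReal.sqrt (∑ j ∈ S, ‖(a j).re‖₊ ^ 2) ≤ NNReal.sqrt (∑ j ∈ S, ‖a j‖₊ ^ 2) := by
    gcongr
    exact NNReal.coe_le_coe.mp (Complex.abs_re_le_norm _)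
  have him : NNReal.sqrt (∑ j ∈ S, ‖(a j).im‖₊ ^ 2) ≤ NNReal.sqrt (∑ j ∈ S, ‖a j‖₊ ^ 2) := by
    gcongr
    exact NNReal.coe_le_coe.mp (Complex.abs_im_le_norm _)
  calc eLpNorm (ellSum a S) p μ
      ≤ eLpNorm (fun x => ∑ j ∈ S, (a j).re * x j) p μ
        + eLpNorm (fun x => ∑ j ∈ S, (a j).im * x j) p μ := by
        simp_rw [funext (ellSum_eq_re_add_im a S)]
        refine (eLpNorm_add_le (Measurable.aestronglyMeasurable (by fun_prop))
          (Measurable.aestronglyMeasurable (by fun_prop)) hp).trans_eq ?_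
        congr 1 <;> refine eLpNorm_congr_norm_ae (ae_of_all _ fun x => ?_) <;>
          simp only [Complex.norm_real, Complex.norm_mul, Complex.norm_I, mul_one]
    _ ≤ _ := by
        rw [hμ.eLpNorm_sum_mul, hμ.eLpNorm_sum_mul, two_mul, add_mul]
        gcongr

lemma memLp_ellSum (hμ : HasIIDGaussianCoords μ v) (a : E → ℂ) (S : Finset E) {p : ℝ≥0∞}
    (hp : 1 ≤ p) (hp_top : p ≠ ∞) : MemLp (ellSum a S) p μ :=
  ⟨(measurable_ellSum a S).aestronglyMeasurable, (hμ.eLpNorm_ellSum_le a S hp).trans_lt <|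
    ENNReal.mul_lt_top (by finiteness) (memLp_id_gaussianReal' p hp_top).eLpNorm_lt_top⟩

lemma dist_toLp_ellSum_le (hμ : HasIIDGaussianCoords μ v) (a : E → ℂ)
    {S T : Finset E} (hTS : T ⊆ S) {p : ℝ≥0∞} [Fact (1 ≤ p)] (hp_top : p ≠ ∞) :
    dist (hμ.memLp_ellSum a S Fact.out hp_top).toLp (hμ.memLp_ellSum a T Fact.out hp_top).toLp ≤
      2 * (eLpNorm id p (gaussianReal 0 v)).toReal *
        √(∑ j ∈ S, ‖a j‖ ^ 2 - ∑ j ∈ T, ‖a j‖ ^ 2) := by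
  classical
  rw [dist_eq_norm, ← MemLp.toLp_sub, Lp.norm_toLp]
  simp only [ellSum_sub_ellSum_of_subset a hTS]
  rw [← Finset.sum_sdiff_eq_sub hTS]
  refine (ENNReal.toReal_mono ?_ (hμ.eLpNorm_ellSum_le a (S \ T) Fact.out)).trans_eq ?_
  · exact ENNReal.mul_ne_top (by finiteness) (memLp_id_gaussianReal' p hp_top).eLpNorm_ne_top
  · simp only [ENNReal.toReal_mul, ENNReal.toReal_ofNat, ENNReal.coe_toReal, Real.coe_sqrt,
      NNReal.coe_sum, NNReal.coe_pow, coe_nnnorm]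
    ring

theorem exists_tendsto_eLpNorm_ellSum (hμ : HasIIDGaussianCoords μ v) {a : E → ℂ}
    (ha : Memℓp a 2) {F : ℕ → Finset E} (hF : Monotone F) (hF_exh : ∀ j, ∃ n, j ∈ F n)
    {p : ℝ≥0∞} [Fact (1 ≤ p)] (hp_top : p ≠ ∞) :
    ∃ g : (E → ℝ) → ℂ, MemLp g p μ ∧
      Tendsto (fun n => eLpNorm (ellSum a (F n) - g) p μ) atTop (𝓝 0) := by
  classical
  have hmem (n : ℕ) := hμ.memLp_ellSum a (F n) Fact.out hp_top
  set K := 2 * (eLpNorm id p (gaussianReal 0 v)).toReal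
  set s : ℕ → ℝ := fun n => ∑ j ∈ F n, ‖a j‖ ^ 2
  have hs : CauchySeq s := by
    have hsum : Summable fun j => ‖a j‖ ^ 2 := by simpa using ha.summable (by norm_num)
    exact (hsum.hasSum.comp (tendsto_atTop_finset_of_monotone hF hF_exh)).cauchySeq
  have hdist (m n : ℕ) : dist (hmem m).toLp (hmem n).toLp ≤ K * √(dist (s m) (s n)) := by
    wlog hmn : n ≤ m generalizing m n
    · rw [dist_comm, dist_comm (s m)]
      exact this n m (le_of_not_ge hmn)
    have hs_mono : s n ≤ s m :=
      Finset.sum_le_sum_of_subset_of_nonneg (hF hmn) fun _ _ _ => by positivity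
    rw [Real.dist_eq, abs_of_nonneg (sub_nonneg.mpr hs_mono)]
    exact hμ.dist_toLp_ellSum_le a (hF hmn) hp_top
  have hcauchy : CauchySeq fun n => (hmem n).toLp := by
    rw [cauchySeq_iff_tendsto_dist_atTop_0] at hs ⊢
    refine squeeze_zero (fun _ => dist_nonneg) (fun mn => hdist mn.1 mn.2) ?_
    simpa using hs.sqrt.const_mul K
  obtain ⟨g, hg⟩ := cauchySeq_tendsto_of_complete hcauchy
  rw [← Lp.toLp_coeFn g (Lp.memLp g), Lp.tendsto_Lp_iff_tendsto_eLpNorm''] at hg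
  exact ⟨g, Lp.memLp g, hg⟩

end HasIIDGaussianCoords

theorem ell_a_Lp_limit_general
    (E : Type*) (h : ℝ)
    (μ : Measure (E → ℝ)) [IsProbabilityMeasure μ]
    (hμ : ∀ S : Finset E,
      μ.map (fun x (i : S) => x i) =
        Measure.pi fun _ : S => gaussianReal 0 (h / 2).toNNReal)
    (a : E → ℂ) (ha : Memℓp a 2)
    (F : ℕ → Finset E) (hFmono : Monotone F) (hFexh : ∀ j : E, ∃ n, j ∈ F n) :
    ∃ ℓa : (E → ℝ) → ℂ, MemLp ℓa 2 μ ∧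
      Tendsto (fun n => eLpNorm (fun x => ellSum a (F n) x - ℓa x) 2 μ)
        atTop (nhds 0) ∧
      ∀ p : ℝ, 1 ≤ p →
        (∀ n, MemLp (fun x => ellSum a (F n) x) (ENNReal.ofReal p) μ) ∧
        Tendsto (fun n =>
            eLpNorm (fun x => ellSum a (F n) x - ℓa x) (ENNReal.ofReal p) μ)
          atTop (nhds 0) := by
  have hμ : HasIIDGaussianCoords μ (h / 2).toNNReal := hμ
  have hmeas (n : ℕ) := (measurable_ellSum a (F n)).aestronglyMeasurable (μ := μ)
  obtain ⟨ℓa, hℓa, hconv⟩ := hμ.exists_tendsto_eLpNorm_ellSum ha hFmono hFexh (p := 2) (by simp)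
  refine ⟨ℓa, hℓa, hconv, fun p hp => ⟨fun n => hμ.memLp_ellSum a (F n)
    (ENNReal.one_le_ofReal.mpr hp) ENNReal.ofReal_ne_top, ?_⟩⟩
  have : Fact (1 ≤ max (ENNReal.ofReal p) 2) := ⟨one_le_two.trans (le_max_right _ _)⟩
  obtain ⟨g, hg, hgconv⟩ := hμ.exists_tendsto_eLpNorm_ellSum ha hFmono hFexh
    (p := max (ENNReal.ofReal p) 2) (by simp)
  have hgℓa : g =ᵐ[μ] ℓa := tendstoInMeasure_ae_unique
    (tendstoInMeasure_of_tendsto_eLpNorm two_ne_zero hmeas hg.1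
      (tendsto_eLpNorm_sub_of_exponent_le (le_max_right _ _) hmeas hg.1 hgconv))
    (tendstoInMeasure_of_tendsto_eLpNorm two_ne_zero hmeas hℓa.1 hconv)
  refine tendsto_eLpNorm_sub_of_exponent_le (le_max_left _ 2) hmeas hℓa.1
    (hgconv.congr fun n => eLpNorm_congr_ae (EventuallyEq.rfl.sub hgℓa))

/-- **Theorem 2.6, `L^p` part.**  Let `E` be countable, `h > 0`, `a ∈ ℓ²(E, ℂ)` and let
`μ = μ_{E,h}^K` be the product over `E` of the Gaussian measures `N(0, h/2)`
(characterized by its finite-dimensional marginals).  If `(F_n)` is an increasing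
exhausting sequence of finite subsets of `E`, then for every real `1 ≤ p < ∞` each
`ℓ_{a,F_n}` belongs to `L^p(μ)` and the sequence `(ℓ_{a,F_n})` converges in `L^p(μ)` to
the function `ℓ_a` that is its `L²` limit. -/
theorem ell_a_Lp_limit
    (E : Type*) [Countable E] (h : ℝ) (hh : 0 < h)
    (μ : Measure (E → ℝ)) [IsProbabilityMeasure μ]
    (hμ : ∀ S : Finset E,
      μ.map (fun x (i : S) => x i) =
        Measure.pi fun _ : S => gaussianReal 0 (h / 2).toNNReal)
    (a : E → ℂ) (ha : Memℓp a 2)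
    (F : ℕ → Finset E) (hFmono : Monotone F) (hFexh : ∀ j : E, ∃ n, j ∈ F n) :
    ∃ ℓa : (E → ℝ) → ℂ, MemLp ℓa 2 μ ∧
      Tendsto (fun n => eLpNorm (fun x => ellSum a (F n) x - ℓa x) 2 μ)
        atTop (nhds 0) ∧
      ∀ p : ℝ, 1 ≤ p →
        (∀ n, MemLp (fun x => ellSum a (F n) x) (ENNReal.ofReal p) μ) ∧
        Tendsto (fun n =>
            eLpNorm (fun x => ellSum a (F n) x - ℓa x) (ENNReal.ofReal p) μ)
          atTop (nhds 0) :=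
  ell_a_Lp_limit_general E h μ hμ a ha F hFmono hFexh
end

section
/- Let E be a countable set, h > 0, and a ∈ ℓ²(E, ℂ). Then for all n < m, ‖exp(ℓ_{a,F_n}) − exp(ℓ_{a,F_m})‖²_{L²(μ_{E,h}^K)} ≤ 3h · exp(h Σ_{j∈E} (Re a_j)²) · Σ_{j∈F_m∖F_n} |a_j|². (Quantitative Cauchy estimate in the proof of Theorem 2.6.) -/
/-!
With `z = ℓ_{a,F_n}` and `w = ℓ_{a,F_m}`, expand
`|e^z - e^w|² = Re (e^{z̄+z} - 2 e^{z̄+w} + e^{w̄+w})`. Each term is the exponential of a linear form in finitely many i.i.d. centred Gaussians of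
variance `v = h / 2`, whose expectation is `exp (v / 2 ∑ c_j²)`. This computes the second moment
exactly: it is `e^{2vR} (1 - 2 Re e^ζ + e^{2vt})`, where `R = ∑_{F_n} (Re a_j)²` and, with all
sums over `F_m \ F_n`, `ζ = v / 2 ∑ a_j²`, `t = ∑ (Re a_j)²`, `u = ∑ (Im a_j)²`. Then
`Re ζ = (α - β) / 4` and, by Cauchy–Schwarz, `(Im ζ)² ≤ α β / 4` for `α = 2vt`, `β = 2vu`, and
the elementary bound `1 - 2 Re e^ζ + e^α ≤ 3 (α + β) e^α` finishes the proof.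
-/

open MeasureTheory ProbabilityTheory Filter
open scoped NNReal ENNReal

open Complex

section EllSum

variable {E : Type*} (a b : E → ℂ) (S T : Finset E) (x : E → ℝ)

theorem ellSum_add : ellSum (a + b) S x = ellSum a S x + ellSum b S x := by
  simp only [ellSum, Pi.add_apply, add_mul, Finset.sum_add_distrib]

theorem star_ellSum : star (ellSum a S x) = ellSum (star a) S x := by
  simp [ellSum, Complex.conj_ofReal]

theorem ellSum_indicator_of_subset (hST : S ⊆ T) :
    ellSum ((S : Set E).indicator a) T x = ellSum a S x := by
  simp only [ellSum]
  exact (Finset.sum_indicator_subset_of_eq_zero a (fun j c => c * (x j : ℂ)) hST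
    fun _ => zero_mul _)

theorem ellSum_eq_sum_subtype :
    ellSum a S x = ∑ i : S, a i * x i :=
  (Finset.sum_coe_sort S fun j => a j * (x j : ℂ)).symm

end EllSum

theorem norm_sub_sq_eq_re (u w : ℂ) :
    ‖u - w‖ ^ 2 = (star u * u - 2 * (star u * w) + star w * w).re := by
  simp only [Complex.sq_norm, Complex.normSq_apply, Complex.sub_re, Complex.add_re,
    Complex.mul_re, Complex.star_def, Complex.conj_re, Complex.conj_im, Complex.sub_im,
    Complex.re_ofNat, Complex.im_ofNat, Complex.mul_im]
  ring

theorem norm_cexp_ellSum_sub_sq {E : Type*} (a : E → ℂ) {S T : Finset E} (hST : S ⊆ T)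
    (x : E → ℝ) :
    ‖cexp (ellSum a S x) - cexp (ellSum a T x)‖ ^ 2 =
      (cexp (ellSum (star a + a) S x) - 2 * cexp (ellSum ((S : Set E).indicator (star a) + a) T x)
        + cexp (ellSum (star a + a) T x)).re := by
  have star_cexp (z : ℂ) : star (cexp z) = cexp (star z) := (Complex.exp_conj z).symm
  simp only [norm_sub_sq_eq_re, star_cexp, star_ellSum, ← Complex.exp_add, ellSum_add,
    ellSum_indicator_of_subset _ _ _ _ hST]

theorem sum_sq_star_add_self {E : Type*} (a : E → ℂ) (S : Finset E) :
    ∑ j ∈ S, (star a j + a j) ^ 2 = ((4 * ∑ j ∈ S, (a j).re ^ 2 : ℝ) : ℂ) := by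
  push_cast [Finset.mul_sum]
  refine Finset.sum_congr rfl fun j _ => ?_
  rw [Pi.star_apply, Complex.star_def, add_comm, Complex.add_conj]
  push_cast
  ring

theorem sum_sq_indicator_star_add_of_subset {E : Type*} [DecidableEq E] (a : E → ℂ)
    {S T : Finset E} (hST : S ⊆ T) :
    ∑ j ∈ T, ((S : Set E).indicator (star a) j + a j) ^ 2 =
      ∑ j ∈ S, (star a j + a j) ^ 2 + ∑ j ∈ T \ S, a j ^ 2 := by
  rw [← Finset.sum_sdiff hST, add_comm]
  congr 1
  · exact Finset.sum_congr rfl fun j hj => by rw [Set.indicator_of_mem (by simpa using hj)]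
  · refine Finset.sum_congr rfl fun j hj => ?_
    rw [Set.indicator_of_notMem (by simpa using (Finset.mem_sdiff.mp hj).2), zero_add]

section SumSq

variable {ι : Type*} (s : Finset ι) (a : ι → ℂ)

theorem Complex.re_sum_sq :
    (∑ j ∈ s, a j ^ 2).re = ∑ j ∈ s, (a j).re ^ 2 - ∑ j ∈ s, (a j).im ^ 2 := by
  simp only [Complex.re_sum, ← Finset.sum_sub_distrib, sq, Complex.mul_re]

theorem Complex.im_sum_sq_sq_le :
    (∑ j ∈ s, a j ^ 2).im ^ 2 ≤ 4 * (∑ j ∈ s, (a j).re ^ 2) * ∑ j ∈ s, (a j).im ^ 2 := by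
  have hcs := Finset.sum_mul_sq_le_sq_mul_sq s (fun j => (a j).re) (fun j => (a j).im)
  have him : (∑ j ∈ s, a j ^ 2).im = 2 * ∑ j ∈ s, (a j).re * (a j).im := by
    simp only [Complex.im_sum, Finset.mul_sum, sq, Complex.mul_im]
    exact Finset.sum_congr rfl fun _ _ => by ring
  rw [him]
  nlinarith

theorem Complex.sum_norm_sq :
    ∑ j ∈ s, ‖a j‖ ^ 2 = ∑ j ∈ s, (a j).re ^ 2 + ∑ j ∈ s, (a j).im ^ 2 := by
  rw [← Finset.sum_add_distrib]
  exact Finset.sum_congr rfl fun j _ => by rw [Complex.sq_norm, Complex.normSq_apply]; ring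

end SumSq

theorem one_sub_two_re_cexp_add_exp_le {α β : ℝ} {ζ : ℂ} (hα : 0 ≤ α) (hβ : 0 ≤ β)
    (hre : ζ.re = (α - β) / 4) (him : ζ.im ^ 2 ≤ α * β / 4) :
    1 - 2 * (cexp ζ).re + Real.exp α ≤ 3 * (α + β) * Real.exp α := by
  set f := Real.exp ((α - β) / 4)
  have hf_pos : 0 < f := Real.exp_pos _
  have hf_lower : (α - β) / 4 + 1 ≤ f := Real.add_one_le_exp _
  have hf_upper : f ≤ Real.exp (α / 4) := Real.exp_le_exp.mpr (by linarith)
  have hre_cexp : f * (1 - ζ.im ^ 2 / 2) ≤ (cexp ζ).re := by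
    rw [Complex.exp_re, hre]
    exact mul_le_mul_of_nonneg_left Real.one_sub_sq_div_two_le_cos hf_pos.le
  have hexp_sub_one : Real.exp α - 1 ≤ α * Real.exp α := by
    have h := mul_le_mul_of_nonneg_left (Real.one_sub_le_exp_neg α) (Real.exp_pos α).le
    rw [← Real.exp_add, add_neg_cancel, Real.exp_zero] at h
    linarith
  have hsq_exp : Real.exp (α / 4) * Real.exp (α / 4) ≤ Real.exp α := by
    rw [← Real.exp_add]; exact Real.exp_le_exp.mpr (by linarith)
  -- `α ≤ 4 exp (α / 4)` absorbs the factor `α` of `ζ.im ^ 2 ≤ α β / 4`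
  have hcos_error : f * ζ.im ^ 2 ≤ β * Real.exp α := by
    have hα_le : α / 4 + 1 ≤ Real.exp (α / 4) := Real.add_one_le_exp _
    calc f * ζ.im ^ 2 ≤ Real.exp (α / 4) * (α * β / 4) :=
          mul_le_mul hf_upper him (sq_nonneg _) (Real.exp_pos _).le
      _ ≤ Real.exp (α / 4) * (Real.exp (α / 4) * β) := by gcongr; nlinarith
      _ ≤ β * Real.exp α := by rw [← mul_assoc, mul_comm β]; gcongr
  have hβ_le : β ≤ β * Real.exp α := le_mul_of_one_le_right hβ (Real.one_le_exp hα)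
  have hαexp : 0 ≤ α * Real.exp α := by positivity
  linarith

theorem integrable_cexp_mul_gaussianReal (m : ℝ) (v : ℝ≥0) (c : ℂ) :
    Integrable (fun y : ℝ => cexp (c * y)) (gaussianReal m v) :=
  integrable_cexp_mul_of_re_mem_integrableExpSet aemeasurable_id (by simp)

theorem integral_cexp_sum_mul_pi_gaussianReal {ι : Type*} [Fintype ι] (m : ι → ℝ)
    (v : ι → ℝ≥0) (c : ι → ℂ) :
    ∫ y, cexp (∑ i, c i * y i) ∂(Measure.pi fun i => gaussianReal (m i) (v i)) =
      ∏ i, cexp (c i * m i + v i * c i ^ 2 / 2) := by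
  simp_rw [Complex.exp_sum, integral_fintype_prod_eq_prod (fun i (y : ℝ) => cexp (c i * y)),
    ← complexMGF_id_gaussianReal]
  rfl

theorem integrable_cexp_sum_mul_pi_gaussianReal {ι : Type*} [Fintype ι] (m : ι → ℝ)
    (v : ι → ℝ≥0) (c : ι → ℂ) :
    Integrable (fun y => cexp (∑ i, c i * y i))
      (Measure.pi fun i => gaussianReal (m i) (v i)) := by
  simp_rw [Complex.exp_sum]
  exact Integrable.fintype_prod (f := fun i (y : ℝ) => cexp (c i * y))
    fun i => integrable_cexp_mul_gaussianReal (m i) (v i) (c i)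

/-- `μ_{E,h}^K` is the measure with these marginals for `v = h / 2`. -/
def HasIIDGaussianMarginals {E : Type*} (μ : Measure (E → ℝ)) (v : ℝ≥0) : Prop :=
  ∀ S : Finset E, μ.map (fun x (i : S) => x i) = Measure.pi fun _ : S => gaussianReal 0 v

section Marginals

variable {E : Type*} {μ : Measure (E → ℝ)} {v : ℝ≥0} (hμ : HasIIDGaussianMarginals μ v)
include hμ

theorem HasIIDGaussianMarginals.integrable_cexp_ellSum (a : E → ℂ) (S : Finset E) :
    Integrable (fun x => cexp (ellSum a S x)) μ := by
  have hmap := integrable_map_measure (μ := μ) (f := fun x (i : S) => x i)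
    (g := fun y : S → ℝ => cexp (∑ i : S, a i * y i))
    (Continuous.aestronglyMeasurable (by fun_prop)) (by fun_prop : Measurable _).aemeasurable
  rw [hμ S] at hmap
  simp_rw [ellSum_eq_sum_subtype]
  exact hmap.mp (integrable_cexp_sum_mul_pi_gaussianReal _ _ _)

theorem HasIIDGaussianMarginals.integral_cexp_ellSum (a : E → ℂ) (S : Finset E) :
    ∫ x, cexp (ellSum a S x) ∂μ = cexp (v / 2 * ∑ j ∈ S, a j ^ 2) := by
  have hmap := integral_map (μ := μ) (φ := fun x (i : S) => x i)
    (f := fun y : S → ℝ => cexp (∑ i : S, a i * y i)) (by fun_prop : Measurable _).aemeasurable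
    (Continuous.aestronglyMeasurable (by fun_prop))
  rw [hμ S, integral_cexp_sum_mul_pi_gaussianReal, ← Complex.exp_sum] at hmap
  simp_rw [ellSum_eq_sum_subtype]
  rw [← hmap, Finset.mul_sum, ← Finset.sum_coe_sort S]
  congr 1
  exact Finset.sum_congr rfl fun _ _ => by push_cast; ring

theorem HasIIDGaussianMarginals.integrable_norm_cexp_ellSum_sub_sq (a : E → ℂ)
    {S T : Finset E} (hST : S ⊆ T) :
    Integrable (fun x => ‖cexp (ellSum a S x) - cexp (ellSum a T x)‖ ^ 2) μ := by
  simp_rw [norm_cexp_ellSum_sub_sq a hST]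
  exact (((hμ.integrable_cexp_ellSum _ S).sub ((hμ.integrable_cexp_ellSum _ T).const_mul 2)).add
    (hμ.integrable_cexp_ellSum _ T)).re

theorem HasIIDGaussianMarginals.integral_norm_cexp_ellSum_sub_sq [DecidableEq E] (a : E → ℂ)
    {S T : Finset E} (hST : S ⊆ T) :
    ∫ x, ‖cexp (ellSum a S x) - cexp (ellSum a T x)‖ ^ 2 ∂μ =
      Real.exp (2 * v * ∑ j ∈ S, (a j).re ^ 2) *
        (1 - 2 * (cexp (v / 2 * ∑ j ∈ T \ S, a j ^ 2)).re +
          Real.exp (2 * v * ∑ j ∈ T \ S, (a j).re ^ 2)) := by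
  have hS := hμ.integrable_cexp_ellSum (star a + a) S
  have hST' := hμ.integrable_cexp_ellSum ((S : Set E).indicator (star a) + a) T
  have hT := hμ.integrable_cexp_ellSum (star a + a) T
  have hdiff := hS.sub (hST'.const_mul 2)
  simp_rw [norm_cexp_ellSum_sub_sq a hST, ← RCLike.re_to_complex]
  rw [integral_re (by exact hdiff.add hT), integral_add (by exact hdiff) hT,
    integral_sub hS (hST'.const_mul 2), integral_const_mul, hμ.integral_cexp_ellSum,
    hμ.integral_cexp_ellSum, hμ.integral_cexp_ellSum]
  simp only [RCLike.re_to_complex, Pi.add_apply]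
  rw [sum_sq_indicator_star_add_of_subset a hST, sum_sq_star_add_self, sum_sq_star_add_self,
    ← Finset.sum_sdiff hST]
  have hexp (r : ℝ) : cexp (v / 2 * ↑(4 * r)) = Real.exp (2 * v * r) := by
    rw [Complex.ofReal_exp]; push_cast; ring_nf
  rw [mul_add, Complex.exp_add, hexp, hexp, mul_add, Real.exp_add]
  simp only [Complex.add_re, Complex.sub_re, Complex.mul_re, Complex.ofReal_re,
    Complex.ofReal_im, Complex.re_ofNat, Complex.im_ofNat, zero_mul, sub_zero]
  ring

theorem HasIIDGaussianMarginals.integral_norm_cexp_ellSum_sub_sq_le [DecidableEq E] (a : E → ℂ)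
    {S T : Finset E} (hST : S ⊆ T) :
    ∫ x, ‖cexp (ellSum a S x) - cexp (ellSum a T x)‖ ^ 2 ∂μ ≤
      6 * v * Real.exp (2 * v * ∑ j ∈ T, (a j).re ^ 2) * ∑ j ∈ T \ S, ‖a j‖ ^ 2 := by
  set t := ∑ j ∈ T \ S, (a j).re ^ 2
  set u := ∑ j ∈ T \ S, (a j).im ^ 2
  have hζ : (v / 2 * ∑ j ∈ T \ S, a j ^ 2 : ℂ) = ((v / 2 : ℝ) : ℂ) * ∑ j ∈ T \ S, a j ^ 2 := by
    push_cast; rfl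
  have hre : (v / 2 * ∑ j ∈ T \ S, a j ^ 2 : ℂ).re = (2 * v * t - 2 * v * u) / 4 := by
    rw [hζ, Complex.re_ofReal_mul, Complex.re_sum_sq]; ring
  have him : (v / 2 * ∑ j ∈ T \ S, a j ^ 2 : ℂ).im ^ 2 ≤ 2 * v * t * (2 * v * u) / 4 := by
    rw [hζ, Complex.im_ofReal_mul, mul_pow]
    calc _ ≤ (v / 2 : ℝ) ^ 2 * (4 * t * u) :=
          mul_le_mul_of_nonneg_left (Complex.im_sum_sq_sq_le _ _) (sq_nonneg _)
      _ = _ := by ring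
  have hkey := one_sub_two_re_cexp_add_exp_le (by positivity) (by positivity) hre him
  rw [hμ.integral_norm_cexp_ellSum_sub_sq a hST, ← Finset.sum_sdiff hST, Complex.sum_norm_sq]
  calc _ ≤ Real.exp (2 * v * ∑ j ∈ S, (a j).re ^ 2) *
          (3 * (2 * v * t + 2 * v * u) * Real.exp (2 * v * t)) :=
        mul_le_mul_of_nonneg_left hkey (Real.exp_pos _).le
    _ = _ := by rw [mul_add (2 * (v : ℝ)), Real.exp_add]; ring

end Marginals

theorem eLpNorm_two_sq_eq_ofReal_integral_norm_sq {α F : Type*} [MeasurableSpace α]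
    {μ : Measure α} [NormedAddCommGroup F] {f : α → F}
    (hf : Integrable (fun x => ‖f x‖ ^ 2) μ) :
    eLpNorm f 2 μ ^ 2 = ENNReal.ofReal (∫ x, ‖f x‖ ^ 2 ∂μ) := by
  have h := eLpNorm_nnreal_pow_eq_lintegral (μ := μ) (f := f) (p := 2) two_ne_zero
  simp only [NNReal.coe_ofNat, ENNReal.rpow_two, ENNReal.coe_ofNat] at h
  rw [h, ofReal_integral_eq_lintegral_ofReal hf (ae_of_all _ fun _ => by positivity)]
  refine lintegral_congr fun x => ?_
  rw [ENNReal.ofReal_pow (norm_nonneg _), ofReal_norm]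

theorem Memℓp.summable_re_sq {E : Type*} {a : E → ℂ} (ha : Memℓp a 2) :
    Summable fun j => (a j).re ^ 2 := by
  have hsq : Summable fun j => ‖a j‖ ^ 2 := by
    simpa using (memℓp_gen_iff (by norm_num : 0 < (2 : ℝ≥0∞).toReal)).mp ha
  refine hsq.of_nonneg_of_le (fun _ => sq_nonneg _) fun j => ?_
  rw [Complex.sq_norm, Complex.normSq_apply, ← sq, ← sq]
  exact le_add_of_nonneg_right (sq_nonneg _)

theorem exp_ell_a_cauchy_estimate_general
    (E : Type*) [DecidableEq E] (h : ℝ) (hh : 0 < h)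
    (μ : Measure (E → ℝ))
    (hμ : ∀ S : Finset E,
      μ.map (fun x (i : S) => x i) =
        Measure.pi fun _ : S => gaussianReal 0 (h / 2).toNNReal)
    (a : E → ℂ) (ha : Memℓp a 2)
    (F : ℕ → Finset E) (hFmono : Monotone F)
    (n m : ℕ) (hnm : n < m) :
    eLpNorm (fun x => Complex.exp (ellSum a (F n) x) -
        Complex.exp (ellSum a (F m) x)) 2 μ ^ 2 ≤
      ENNReal.ofReal (3 * h * Real.exp (h * ∑' j : E, (a j).re ^ 2) *
        ∑ j ∈ F m \ F n, ‖a j‖ ^ 2) := by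
  have hμ' : HasIIDGaussianMarginals μ (h / 2).toNNReal := hμ
  have hsub : F n ⊆ F m := hFmono hnm.le
  have hv : ((h / 2).toNNReal : ℝ) = h / 2 := Real.coe_toNNReal _ (by positivity)
  have hsum : ∑ j ∈ F m, (a j).re ^ 2 ≤ ∑' j, (a j).re ^ 2 :=
    ha.summable_re_sq.sum_le_tsum _ fun _ _ => sq_nonneg _
  rw [eLpNorm_two_sq_eq_ofReal_integral_norm_sq (hμ'.integrable_norm_cexp_ellSum_sub_sq a hsub)]
  refine ENNReal.ofReal_le_ofReal ((hμ'.integral_norm_cexp_ellSum_sub_sq_le a hsub).trans ?_)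
  calc _ = 3 * h * Real.exp (h * ∑ j ∈ F m, (a j).re ^ 2) * ∑ j ∈ F m \ F n, ‖a j‖ ^ 2 := by
        rw [hv, mul_div_cancel₀ h two_ne_zero]; ring
    _ ≤ _ := by gcongr

/-- **Quantitative Cauchy estimate in the proof of Theorem 2.6.**  Let `E` be countable,
`h > 0`, `a ∈ ℓ²(E, ℂ)` and let `μ = μ_{E,h}^K` be the product over `E` of the Gaussian
measures `N(0, h/2)` (characterized by its finite-dimensional marginals).  If `(F_n)` is
an increasing exhausting sequence of finite subsets of `E`, then for `n < m`,
`‖exp(ℓ_{a,F_n}) − exp(ℓ_{a,F_m})‖²_{L²(μ)}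
  ≤ 3h · exp(h ∑_{j∈E} (Re a_j)²) · ∑_{j∈F_m∖F_n} |a_j|²`. -/
theorem exp_ell_a_cauchy_estimate
    (E : Type*) [Countable E] [DecidableEq E] (h : ℝ) (hh : 0 < h)
    (μ : Measure (E → ℝ)) [IsProbabilityMeasure μ]
    (hμ : ∀ S : Finset E,
      μ.map (fun x (i : S) => x i) =
        Measure.pi fun _ : S => gaussianReal 0 (h / 2).toNNReal)
    (a : E → ℂ) (ha : Memℓp a 2)
    (F : ℕ → Finset E) (hFmono : Monotone F) (hFexh : ∀ j : E, ∃ n, j ∈ F n)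
    (n m : ℕ) (hnm : n < m) :
    eLpNorm (fun x => Complex.exp (ellSum a (F n) x) -
        Complex.exp (ellSum a (F m) x)) 2 μ ^ 2 ≤
      ENNReal.ofReal (3 * h * Real.exp (h * ∑' j : E, (a j).re ^ 2) *
        ∑ j ∈ F m \ F n, ‖a j‖ ^ 2) :=
  exp_ell_a_cauchy_estimate_general E h hh μ hμ a ha F hFmono n m hnm
end
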